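/- Let F : (0, 1/2) → ℝ be defined by F(y) = (f*_{4,1}(y)/W(y;4)) · (G̃_4(y)/c_{12}(y)) - d/dy [ c_{21}(y) f*_{4,1}(y)^2 / (W(y;4) c_{12}(y)) ], where f*_{4,1}(y) = 1/(5y^2 + 3h(y)^2)^3 with h(y) = sqrt(2+y^2) - 2, c_{12}(y) = (h(y)^2 - y^2)/(1 - h'(y)^2), c_{21}(y) = 2(h(y)h'(y) - y)/(1 - h'(y)^2), G̃_4(y) = c_{21}(y)[f*_{4,1}]'(y) + (c_{20}(y) - 12) f*_{4,1}(y) with c_{20} the d=7 coefficient of the hyperboloidal wave operator, and W(y;4) = ((y^2+1)(1-4y^2)^{-4}(3√(y^2+2) - y + 4)^2(3√(y^2+2) + y + 4)^2)/(y^6 √(y^2+2) √(y^2 + 2√(y^2+2) + 3)). Then lim_{y→0^+} F(y) = 0 and there exists δ_0 > 0 such that F(y) > 0 for all y ∈ (0, δ_0). -/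

import Mathlib

/-- The height function `h(y) = √(2+y²) - 2`. -/
noncomputable def hFun (y : ℝ) : ℝ := Real.sqrt (2 + y ^ 2) - 2

/-- `c₁₂(y) = (h² - y²)/(1 - h'²)`. -/
noncomputable def c12 (y : ℝ) : ℝ :=
  (hFun y ^ 2 - y ^ 2) / (1 - (deriv hFun y) ^ 2)

/-- `c₂₁(y) = 2(h h' - y)/(1 - h'²)`. -/
noncomputable def c21 (y : ℝ) : ℝ :=
  2 * (hFun y * deriv hFun y - y) / (1 - (deriv hFun y) ^ 2)

/-- The coefficient `c₂₀(y)` of the hyperboloidal wave operator in `d = 7`. -/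
noncomputable def c20 (y : ℝ) : ℝ :=
  -1 - (6 / y) * ((y * deriv hFun y - hFun y) * deriv hFun y) / (1 - (deriv hFun y) ^ 2)
    + ((y ^ 2 - hFun y ^ 2) / (1 - (deriv hFun y) ^ 2)) *
        (deriv (deriv hFun) y / (y * deriv hFun y - hFun y))

/-- The first component of the unstable eigenfunction, `f*₄₁(y) = 1/(5y² + 3h(y)²)³`. -/
noncomputable def f41 (y : ℝ) : ℝ := 1 / (5 * y ^ 2 + 3 * hFun y ^ 2) ^ 3

/-- `G̃₄(y) = c₂₁ (f*₄₁)' + (c₂₀ - 12) f*₄₁`. -/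
noncomputable def Gtilde4 (y : ℝ) : ℝ :=
  c21 y * deriv f41 y + (c20 y - 12) * f41 y

/-- The explicit Wronskian expression `W(y;4)`. -/
noncomputable def W4 (y : ℝ) : ℝ :=
  ((y ^ 2 + 1) * (1 - 4 * y ^ 2) ^ (-4 : ℤ) *
      (3 * Real.sqrt (y ^ 2 + 2) - y + 4) ^ 2 * (3 * Real.sqrt (y ^ 2 + 2) + y + 4) ^ 2) /
    (y ^ 6 * Real.sqrt (y ^ 2 + 2) * Real.sqrt (y ^ 2 + 2 * Real.sqrt (y ^ 2 + 2) + 3))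

/-- The function `F` from the nonvanishing-of-the-Riesz-projection argument. -/
noncomputable def Ffun (y : ℝ) : ℝ :=
  f41 y / W4 y * (Gtilde4 y / c12 y)
    - deriv (fun z : ℝ => c21 z * (f41 z) ^ 2 / (W4 z * c12 z)) y

/-!
With `t = √(2 + y²) = h(y) + 2` every coefficient is rational in `t`, up to odd factors of `y`:
`h' = y/t`, `c₁₂ = (3 - 2t)t²`, `c₂₁ = -2yt`, `f*₄₁ = 1/(8(4t² - 6t + 1)³)` and
`W(y;4) = 4(t - 1)/(y⁶ t (3 - 2t)⁴)` (the factors `(3t ± y + 4)²` and `1 - 4y²` cancel using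
`t² = 2 + y²`); the `…Red` functions are these rational functions of `t`. So the boundary term
`c₂₁ f*₄₁²/(W c₁₂)` is `y⁷ fluxRed t` and, as `y t' = (t² - 2)/t`, `F(y) = y⁶ FfunRed t` with
`FfunRed` continuous near `t = √2`. At `t = √2` its derivative term drops out and
`FfunRed √2 = (3 - 2√2)³ (20√2 - 26) / (512 (9 - 6√2)⁶ (√2 - 1)²) > 0`.
-/

open Filter Topology Set

noncomputable def f41Red (t : ℝ) : ℝ := 1 / (8 * (4 * t ^ 2 - 6 * t + 1) ^ 3)

noncomputable def c12Red (t : ℝ) : ℝ := (3 - 2 * t) * t ^ 2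

noncomputable def W4Red (t : ℝ) : ℝ := 4 * (t - 1) / (t * (3 - 2 * t) ^ 4)

noncomputable def Gtilde4Red (t : ℝ) : ℝ :=
  3 * (t ^ 2 - 2) * (4 * t - 3) / (2 * (4 * t ^ 2 - 6 * t + 1) ^ 4)
    + (-6 * t ^ 2 + t + 4) / (8 * (t - 1) * (4 * t ^ 2 - 6 * t + 1) ^ 3)

noncomputable def fluxRed (t : ℝ) : ℝ := -2 * t * f41Red t ^ 2 / (W4Red t * c12Red t)

noncomputable def FfunRed (t : ℝ) : ℝ :=
  f41Red t / W4Red t * (Gtilde4Red t / c12Red t) - 7 * fluxRed t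
    - (t ^ 2 - 2) / t * deriv fluxRed t

section SqrtTwoAddSq

variable (y : ℝ)

lemma sq_sqrt_two_add_sq : √(2 + y ^ 2) ^ 2 = 2 + y ^ 2 := Real.sq_sqrt (by positivity)

lemma sqrt_two_add_sq_pos : 0 < √(2 + y ^ 2) := Real.sqrt_pos.2 (by positivity)

lemma one_lt_sqrt_two_add_sq : 1 < √(2 + y ^ 2) := by
  rw [show (1 : ℝ) = √1 by simp]
  exact Real.sqrt_lt_sqrt zero_le_one (by nlinarith [sq_nonneg y])

lemma quadratic_sqrt_two_add_sq_pos : 0 < 4 * √(2 + y ^ 2) ^ 2 - 6 * √(2 + y ^ 2) + 1 := by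
  nlinarith [sq_sqrt_two_add_sq y, one_lt_sqrt_two_add_sq y]

lemma hasDerivAt_sqrt_two_add_sq :
    HasDerivAt (fun z : ℝ => √(2 + z ^ 2)) (y / √(2 + y ^ 2)) y := by
  have h := ((hasDerivAt_pow 2 y).const_add 2).sqrt (by positivity)
  convert h using 1
  push_cast
  ring

end SqrtTwoAddSq

lemma deriv_hFun : deriv hFun = fun y => y / √(2 + y ^ 2) :=
  funext fun y => ((hasDerivAt_sqrt_two_add_sq y).sub_const 2).deriv

lemma deriv_deriv_hFun (y : ℝ) : deriv (deriv hFun) y = 2 / √(2 + y ^ 2) ^ 3 := by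
  have hs := sqrt_two_add_sq_pos y
  have hd : HasDerivAt (fun z : ℝ => z / √(2 + z ^ 2))
      ((1 * √(2 + y ^ 2) - y * (y / √(2 + y ^ 2))) / √(2 + y ^ 2) ^ 2) y :=
    (hasDerivAt_id y).div (hasDerivAt_sqrt_two_add_sq y) hs.ne'
  rw [deriv_hFun, hd.deriv]
  field_simp
  linear_combination sq_sqrt_two_add_sq y

lemma one_sub_deriv_hFun_sq (y : ℝ) : 1 - deriv hFun y ^ 2 = 2 / √(2 + y ^ 2) ^ 2 := by
  have hs := sqrt_two_add_sq_pos y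
  rw [deriv_hFun]
  field_simp
  linear_combination sq_sqrt_two_add_sq y

lemma c12_eq (y : ℝ) : c12 y = c12Red √(2 + y ^ 2) := by
  have hs := sqrt_two_add_sq_pos y
  rw [c12, one_sub_deriv_hFun_sq, hFun, c12Red]
  field_simp
  linear_combination sq_sqrt_two_add_sq y

lemma c21_eq (y : ℝ) : c21 y = -2 * y * √(2 + y ^ 2) := by
  have hs := sqrt_two_add_sq_pos y
  rw [c21, one_sub_deriv_hFun_sq, deriv_hFun, hFun]
  field_simp
  ring

lemma c20_eq {y : ℝ} (hy : y ≠ 0) :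
    c20 y = (-6 * √(2 + y ^ 2) ^ 2 + 13 * √(2 + y ^ 2) - 8) / (√(2 + y ^ 2) - 1) := by
  have hs := sqrt_two_add_sq_pos y
  have hs1 : √(2 + y ^ 2) - 1 ≠ 0 := (sub_pos.2 (one_lt_sqrt_two_add_sq y)).ne'
  have hyh : y * deriv hFun y - hFun y = 2 * (√(2 + y ^ 2) - 1) / √(2 + y ^ 2) := by
    rw [deriv_hFun, hFun]
    field_simp
    linear_combination -sq_sqrt_two_add_sq y
  rw [c20, hyh, one_sub_deriv_hFun_sq, deriv_deriv_hFun, deriv_hFun, hFun]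
  field_simp
  linear_combination -sq_sqrt_two_add_sq y

lemma f41_eq (y : ℝ) : f41 y = f41Red √(2 + y ^ 2) := by
  rw [f41, f41Red, hFun,
    show 5 * y ^ 2 + 3 * (√(2 + y ^ 2) - 2) ^ 2
        = 2 * (4 * √(2 + y ^ 2) ^ 2 - 6 * √(2 + y ^ 2) + 1) by linear_combination -5 * sq_sqrt_two_add_sq y]
  ring

lemma hasDerivAt_f41Red {t : ℝ} (ht : 4 * t ^ 2 - 6 * t + 1 ≠ 0) :
    HasDerivAt f41Red (-3 * (4 * t - 3) / (4 * (4 * t ^ 2 - 6 * t + 1) ^ 4)) t := by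
  have hA : HasDerivAt (fun t : ℝ => 4 * t ^ 2 - 6 * t + 1) (8 * t - 6) t :=
    ((((hasDerivAt_pow 2 t).const_mul 4).sub ((hasDerivAt_id' t).const_mul 6)).add_const
      1).congr_deriv (by norm_num; ring)
  refine ((hasDerivAt_const t (1 : ℝ)).div ((hA.pow 3).const_mul 8) ?_).congr_deriv ?_
  · simpa using ht
  · simp only [Pi.pow_apply]
    generalize 4 * t ^ 2 - 6 * t + 1 = A at ht ⊢
    field_simp
    ring

lemma hasDerivAt_f41 (y : ℝ) :
    HasDerivAt f41
      (-3 * (4 * √(2 + y ^ 2) - 3) / (4 * (4 * √(2 + y ^ 2) ^ 2 - 6 * √(2 + y ^ 2) + 1) ^ 4)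
        * (y / √(2 + y ^ 2))) y := by
  have h := (hasDerivAt_f41Red (quadratic_sqrt_two_add_sq_pos y).ne').comp y
    (hasDerivAt_sqrt_two_add_sq y)
  rwa [show f41 = f41Red ∘ fun z => √(2 + z ^ 2) from funext f41_eq]

lemma W4_eq (y : ℝ) : W4 y = W4Red √(2 + y ^ 2) / y ^ 6 := by
  set s := √(2 + y ^ 2) with hs
  have hs2 : s ^ 2 = 2 + y ^ 2 := sq_sqrt_two_add_sq y
  have hs0 : 0 < s := sqrt_two_add_sq_pos y
  have hroot : √(y ^ 2 + 2 * √(y ^ 2 + 2) + 3) = s + 1 := by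
    rw [add_comm (y ^ 2) 2, ← hs, ← Real.sqrt_sq (by positivity : 0 ≤ s + 1)]
    congr 1
    linear_combination -hs2
  calc W4 y = (y ^ 2 + 1) * ((3 * s - y + 4) * (3 * s + y + 4)) ^ 2 * ((1 - 4 * y ^ 2) ^ 4)⁻¹
        / (y ^ 6 * s * (s + 1)) := by
        rw [W4, hroot, add_comm (y ^ 2) 2, ← hs, zpow_neg, zpow_ofNat]
        ring
    _ = (s - 1) * (s + 1) * (2 * (2 * s + 3) ^ 2) ^ 2 * (((3 - 2 * s) * (3 + 2 * s)) ^ 4)⁻¹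
        / (y ^ 6 * s * (s + 1)) := by
        rw [show y ^ 2 + 1 = (s - 1) * (s + 1) by linear_combination -hs2,
          show (3 * s - y + 4) * (3 * s + y + 4) = 2 * (2 * s + 3) ^ 2 by linear_combination hs2,
          show 1 - 4 * y ^ 2 = (3 - 2 * s) * (3 + 2 * s) by linear_combination 4 * hs2]
    _ = W4Red s / y ^ 6 := by
        rw [W4Red]
        field_simp
        ring

lemma Gtilde4_eq {y : ℝ} (hy : y ≠ 0) : Gtilde4 y = Gtilde4Red √(2 + y ^ 2) := by
  have hs0 := sqrt_two_add_sq_pos y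
  have hs1 : √(2 + y ^ 2) - 1 ≠ 0 := (sub_pos.2 (one_lt_sqrt_two_add_sq y)).ne'
  have hA := quadratic_sqrt_two_add_sq_pos y
  rw [Gtilde4, c21_eq, c20_eq hy, (hasDerivAt_f41 y).deriv, f41_eq, Gtilde4Red, f41Red,
    show √(2 + y ^ 2) ^ 2 - 2 = y ^ 2 by linear_combination sq_sqrt_two_add_sq y]
  field_simp
  ring

lemma f41_div_W4_mul_Gtilde4_div_c12 {y : ℝ} (hy : y ≠ 0) :
    f41 y / W4 y * (Gtilde4 y / c12 y) = y ^ 6 * (f41Red √(2 + y ^ 2) / W4Red √(2 + y ^ 2)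
      * (Gtilde4Red √(2 + y ^ 2) / c12Red √(2 + y ^ 2))) := by
  rw [f41_eq, W4_eq, Gtilde4_eq hy, c12_eq]
  simp only [div_eq_mul_inv, mul_inv, inv_inv]
  ring

lemma c21_mul_f41_sq_div (y : ℝ) :
    c21 y * f41 y ^ 2 / (W4 y * c12 y) = y ^ 7 * fluxRed √(2 + y ^ 2) := by
  rw [c21_eq, f41_eq, W4_eq, c12_eq, fluxRed]
  simp only [div_eq_mul_inv, mul_inv, inv_inv]
  ring

section Rational

variable {t : ℝ}

lemma denominators_pos_of_mem_Ioo (ht : t ∈ Ioo (4 / 3 : ℝ) (3 / 2)) :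
    0 < t ∧ 0 < t - 1 ∧ 0 < 3 - 2 * t ∧ 0 < 4 * t ^ 2 - 6 * t + 1 := by
  obtain ⟨hlo, hhi⟩ := ht
  exact ⟨by linarith, by linarith, by linarith, by nlinarith⟩

lemma W4Red_pos (ht : t ∈ Ioo (4 / 3 : ℝ) (3 / 2)) : 0 < W4Red t := by
  obtain ⟨h0, h1, h3, -⟩ := denominators_pos_of_mem_Ioo ht
  unfold W4Red
  positivity

lemma c12Red_pos (ht : t ∈ Ioo (4 / 3 : ℝ) (3 / 2)) : 0 < c12Red t := by
  obtain ⟨h0, -, h3, -⟩ := denominators_pos_of_mem_Ioo ht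
  unfold c12Red
  positivity

lemma contDiffOn_f41Red : ContDiffOn ℝ 1 f41Red (Ioo (4 / 3) (3 / 2)) :=
  contDiffOn_const.div (by fun_prop) fun _ ht =>
    (by have := (denominators_pos_of_mem_Ioo ht).2.2.2; positivity)

lemma contDiffOn_W4Red : ContDiffOn ℝ 1 W4Red (Ioo (4 / 3) (3 / 2)) :=
  ContDiffOn.div (by fun_prop) (by fun_prop) fun _ ht =>
    (by obtain ⟨h0, -, h3, -⟩ := denominators_pos_of_mem_Ioo ht; positivity)

lemma continuousOn_Gtilde4Red : ContinuousOn Gtilde4Red (Ioo (4 / 3) (3 / 2)) :=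
  ContinuousOn.add
    (ContinuousOn.div (by fun_prop) (by fun_prop) fun _ ht =>
      (by have := (denominators_pos_of_mem_Ioo ht).2.2.2; positivity))
    (ContinuousOn.div (by fun_prop) (by fun_prop) fun _ ht =>
      (by obtain ⟨-, h1, -, hA⟩ := denominators_pos_of_mem_Ioo ht; positivity))

lemma contDiffOn_fluxRed : ContDiffOn ℝ 1 fluxRed (Ioo (4 / 3) (3 / 2)) :=
  ContDiffOn.div ((contDiffOn_const.mul contDiffOn_id).mul (contDiffOn_f41Red.pow 2))
    (contDiffOn_W4Red.mul (by unfold c12Red; fun_prop)) fun _ ht =>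
      (mul_pos (W4Red_pos ht) (c12Red_pos ht)).ne'

lemma continuousOn_FfunRed : ContinuousOn FfunRed (Ioo (4 / 3) (3 / 2)) := by
  have hflux := contDiffOn_fluxRed
  refine ContinuousOn.sub (ContinuousOn.sub (ContinuousOn.mul ?_ ?_) ?_) (ContinuousOn.mul ?_ ?_)
  · exact contDiffOn_f41Red.continuousOn.div contDiffOn_W4Red.continuousOn
      fun _ ht => (W4Red_pos ht).ne'
  · exact continuousOn_Gtilde4Red.div (by unfold c12Red; fun_prop) fun _ ht => (c12Red_pos ht).ne'
  · exact continuousOn_const.mul hflux.continuousOn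
  · exact ContinuousOn.div (by fun_prop) continuousOn_id fun _ ht =>
      (denominators_pos_of_mem_Ioo ht).1.ne'
  · exact hflux.continuousOn_deriv_of_isOpen isOpen_Ioo le_rfl

lemma FfunRed_sqrt_two_pos : 0 < FfunRed √2 := by
  set r := √2
  have hr2 : r ^ 2 = 2 := Real.sq_sqrt zero_le_two
  have hr0 : 0 ≤ r := Real.sqrt_nonneg 2
  have hr_lo : 1.4 < r := by nlinarith
  have hr_hi : r < 1.5 := by nlinarith
  have h3 : 0 < 3 - 2 * r := by linarith
  have h9 : 0 < 9 - 6 * r := by linarith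
  have h1 : 0 < r - 1 := by linarith
  have hf : f41Red r = 1 / (8 * (9 - 6 * r) ^ 3) := by rw [f41Red, hr2]; ring
  have hc : c12Red r = 2 * (3 - 2 * r) := by rw [c12Red, hr2]; ring
  have hG : Gtilde4Red r = (r - 8) / (8 * (r - 1) * (9 - 6 * r) ^ 3) := by
    rw [Gtilde4Red, hr2]; ring
  have hvalue : FfunRed r = (3 - 2 * r) ^ 3 * (r * (r - 8) + 14 * r ^ 2 * (r - 1))
      / (512 * (9 - 6 * r) ^ 6 * (r - 1) ^ 2) := by
    rw [FfunRed, fluxRed, hf, hc, hG, W4Red, sub_eq_zero_of_eq hr2, zero_div, zero_mul, sub_zero]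
    field_simp
    ring
  rw [hvalue]
  have hnum : 0 < r * (r - 8) + 14 * r ^ 2 * (r - 1) := by nlinarith
  positivity

end Rational

lemma sqrt_two_add_sq_mem_Ioo {y : ℝ} (hy : y ^ 2 < 1 / 4) :
    √(2 + y ^ 2) ∈ Ioo (4 / 3 : ℝ) (3 / 2) := by
  have hs2 := sq_sqrt_two_add_sq y
  have hs0 := Real.sqrt_nonneg (2 + y ^ 2)
  constructor <;> nlinarith [sq_nonneg y]

lemma Ffun_eq {y : ℝ} (hy : y ∈ Ioo (0 : ℝ) (1 / 2)) :
    Ffun y = y ^ 6 * FfunRed √(2 + y ^ 2) := by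
  obtain ⟨hy0, hy1⟩ := hy
  have hsI := sqrt_two_add_sq_mem_Ioo (y := y) (by nlinarith)
  have hs0 := (denominators_pos_of_mem_Ioo hsI).1
  have hflux : HasDerivAt (fun z => z ^ 7 * fluxRed √(2 + z ^ 2))
      ((7 : ℕ) * y ^ 6 * fluxRed √(2 + y ^ 2)
        + y ^ 7 * (deriv fluxRed √(2 + y ^ 2) * (y / √(2 + y ^ 2)))) y := by
    have hd := ((contDiffOn_fluxRed.contDiffAt (isOpen_Ioo.mem_nhds hsI)).differentiableAt
      one_ne_zero).hasDerivAt.comp y (hasDerivAt_sqrt_two_add_sq y)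
    exact (hasDerivAt_pow 7 y).mul hd
  rw [Ffun, f41_div_W4_mul_Gtilde4_div_c12 hy0.ne', funext c21_mul_f41_sq_div, hflux.deriv, FfunRed,
    show √(2 + y ^ 2) ^ 2 - 2 = y ^ 2 by linear_combination sq_sqrt_two_add_sq y]
  field_simp
  ring

theorem tendsto_zero_and_pos_of_eventuallyEq_pow_mul {F Φ : ℝ → ℝ} {n : ℕ} (hn : n ≠ 0)
    (hF : F =ᶠ[𝓝[>] 0] fun y => y ^ n * Φ y) (hΦ : ContinuousAt Φ 0) (hΦ0 : 0 < Φ 0) :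
    Tendsto F (𝓝[>] 0) (𝓝 0) ∧ ∃ δ, 0 < δ ∧ ∀ y ∈ Ioo 0 δ, 0 < F y := by
  constructor
  · have h : Tendsto (fun y => y ^ n * Φ y) (𝓝 0) (𝓝 (0 ^ n * Φ 0)) :=
      ((continuousAt_id.pow n).mul hΦ).tendsto
    rw [zero_pow hn, zero_mul] at h
    exact (h.mono_left nhdsWithin_le_nhds).congr' hF.symm
  · have hpos : ∀ᶠ y in 𝓝[>] 0, 0 < F y := by
      filter_upwards [hF, self_mem_nhdsWithin,
        nhdsWithin_le_nhds (hΦ.eventually (lt_mem_nhds hΦ0))] with y hFy hy hΦy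
      rw [hFy]
      exact mul_pos (pow_pos hy n) hΦy
    obtain ⟨δ, hδ, hsub⟩ := mem_nhdsGT_iff_exists_Ioo_subset.1 hpos
    exact ⟨δ, hδ, fun y hy => hsub hy⟩

/-- `F(y) → 0` as `y → 0⁺`, and `F > 0` on an interval `(0, δ₀)`. -/
theorem Ffun_limit_zero_and_positive :
    Filter.Tendsto Ffun (nhdsWithin 0 (Set.Ioi 0)) (nhds 0)
    ∧ ∃ δ0 : ℝ, 0 < δ0 ∧ ∀ y ∈ Set.Ioo (0 : ℝ) δ0, 0 < Ffun y := by
  have hs0 : √(2 + (0 : ℝ) ^ 2) ∈ Ioo (4 / 3 : ℝ) (3 / 2) :=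
    sqrt_two_add_sq_mem_Ioo (by norm_num)
  have hcont : ContinuousAt (fun y : ℝ => FfunRed √(2 + y ^ 2)) 0 :=
    (continuousOn_FfunRed.continuousAt (isOpen_Ioo.mem_nhds hs0)).comp
      (f := fun y : ℝ => √(2 + y ^ 2)) (by fun_prop)
  refine tendsto_zero_and_pos_of_eventuallyEq_pow_mul (n := 6) (by norm_num) ?_ hcont ?_
  · filter_upwards [Ioo_mem_nhdsGT (by norm_num : (0 : ℝ) < 1 / 2)] with y hy using Ffun_eq hy
  · simpa using FfunRed_sqrt_two_pos
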